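/- arXiv:1305.5692 — 2 statements merged into one kernel-verified Lean document; each statement's English description precedes it below -/
import Mathlib

section
/- For a nontrivial finite simple graph G, the bondage number b(G) is at most b_1(G) = min { d(x) + d(y) - 1 : x, y ∈ V(G), 1 ≤ dist(x,y) ≤ 2 }. -/
open SimpleGraph

/-- The domination number of a graph: minimum size of a dominating set. -/
noncomputable def dominationNumber {V : Type*} (G : SimpleGraph V) : ℕ :=
  sInf {n | ∃ D : Finset V, (∀ v, v ∉ D → ∃ u ∈ D, G.Adj u v) ∧ D.card = n}

/-- The bondage number: minimum number of edges whose removal increases the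
domination number. -/
noncomputable def bondageNumber {V : Type*} (G : SimpleGraph V) : ℕ :=
  sInf {n | ∃ B : Finset (Sym2 V), ↑B ⊆ G.edgeSet ∧ B.card = n ∧
    dominationNumber G < dominationNumber (G.deleteEdges ↑B)}

/-- b₁(G) = min { d(x) + d(y) - 1 : 1 ≤ dist(x,y) ≤ 2 }. -/
noncomputable def bOne {V : Type*} [Fintype V] (G : SimpleGraph V)
    [DecidableRel G.Adj] : ℕ :=
  sInf {n | ∃ x y : V, 1 ≤ G.dist x y ∧ G.dist x y ≤ 2 ∧
    n = G.degree x + G.degree y - 1}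

/-!
Choose `x, y` realising `b₁(G)` and a neighbour `z` of `y` with `z = x` or `z ~ x`. Deleting every
edge at `x` and every edge at `y` except `yz` removes at most `d(x) + d(y) - 1` edges, and leaves a
graph `G'` in which `x` is isolated and `z` is the only possible neighbour of `y`. A dominating set
`D` of `G'` therefore contains `x`, and `y` or `z`. If `x ~ y`, drop `y` (dominated by `x` in `G`);
if `z ∈ D`, drop `x`; otherwise replace `x, y` by `z`. Each time we get a smaller dominating set of
`G`, so `γ(G) < γ(G')`.
-/

open Finset

namespace SimpleGraph

variable {V : Type*} {G G' : SimpleGraph V} {D : Finset V} {x y z : V}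

def IsDominatingSet (G : SimpleGraph V) (D : Finset V) : Prop :=
  ∀ v, v ∉ D → ∃ u ∈ D, G.Adj u v

lemma IsDominatingSet.superset {D' : Finset V} (hD : G.IsDominatingSet D) (h : D ⊆ D') :
    G.IsDominatingSet D' := fun v hv ↦
  (hD v fun hvD ↦ hv (h hvD)).imp fun _ ⟨hu, huv⟩ ↦ ⟨h hu, huv⟩

lemma IsDominatingSet.mem_of_forall_not_adj (hD : G.IsDominatingSet D) (hx : ∀ w, ¬ G.Adj x w) :
    x ∈ D := by
  by_contra hxD
  obtain ⟨u, -, hux⟩ := hD x hxD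
  exact hx u hux.symm

lemma IsDominatingSet.sdiff [DecidableEq V] {S : Finset V} (hD : G'.IsDominatingSet D)
    (hle : G' ≤ G) (hS : ∀ s ∈ S, ∀ w, G'.Adj s w → w ∈ D)
    (hS' : ∀ s ∈ S, ∃ u ∈ D \ S, G.Adj u s) : G.IsDominatingSet (D \ S) := by
  intro v hv
  by_cases hvS : v ∈ S
  · exact hS' v hvS
  have hvD : v ∉ D := fun hvD ↦ hv (mem_sdiff.2 ⟨hvD, hvS⟩)
  obtain ⟨u, huD, huv⟩ := hD v hvD
  have huS : u ∉ S := fun huS ↦ hvD (hS u huS v huv)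
  exact ⟨u, mem_sdiff.2 ⟨huD, huS⟩, hle huv⟩

lemma dominationNumber_le (hD : G.IsDominatingSet D) : dominationNumber G ≤ #D :=
  Nat.sInf_le ⟨D, hD, rfl⟩

lemma exists_isDominatingSet_card_eq [Finite V] (G : SimpleGraph V) :
    ∃ D, G.IsDominatingSet D ∧ #D = dominationNumber G := by
  have := Fintype.ofFinite V
  have hne : {n | ∃ D, G.IsDominatingSet D ∧ #D = n}.Nonempty :=
    ⟨_, univ, fun v hv ↦ absurd (mem_univ v) hv, rfl⟩
  exact Nat.sInf_mem hne

lemma dominationNumber_lt_of_forall_exists_card_lt [Finite V]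
    (h : ∀ D, G'.IsDominatingSet D → ∃ D', G.IsDominatingSet D' ∧ #D' < #D) :
    dominationNumber G < dominationNumber G' := by
  obtain ⟨D, hD, hcard⟩ := exists_isDominatingSet_card_eq G'
  obtain ⟨D', hD', hlt⟩ := h D hD
  exact hcard ▸ (dominationNumber_le hD').trans_lt hlt

lemma dominationNumber_lt_of_adj_of_forall_not_adj [Finite V] (hle : G' ≤ G) (hxy : G.Adj x y)
    (hx : ∀ w, ¬ G'.Adj x w) (hy : ∀ w, ¬ G'.Adj y w) :
    dominationNumber G < dominationNumber G' := by
  classical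
  refine dominationNumber_lt_of_forall_exists_card_lt fun D hD ↦ ⟨D \ {y}, ?_, ?_⟩
  · refine hD.sdiff hle (by simp [hy]) ?_
    simpa using ⟨x, ⟨hD.mem_of_forall_not_adj hx, hxy.ne⟩, hxy⟩
  · rw [sdiff_singleton_eq_erase]
    exact card_erase_lt_of_mem (hD.mem_of_forall_not_adj hy)

lemma dominationNumber_lt_of_adj_of_adj [Finite V] (hle : G' ≤ G) (hxy : x ≠ y)
    (hxz : G.Adj x z) (hyz : G.Adj y z) (hx : ∀ w, ¬ G'.Adj x w) (hy : ∀ w, G'.Adj y w → w = z) :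
    dominationNumber G < dominationNumber G' := by
  classical
  refine dominationNumber_lt_of_forall_exists_card_lt fun D hD ↦ ?_
  have hxD := hD.mem_of_forall_not_adj hx
  by_cases hzD : z ∈ D
  · refine ⟨D \ {x}, hD.sdiff hle (by simp [hx]) ?_, ?_⟩
    · simpa using ⟨z, ⟨hzD, hxz.ne'⟩, hxz.symm⟩
    · rw [sdiff_singleton_eq_erase]
      exact card_erase_lt_of_mem hxD
  have hyD : y ∈ D := by
    by_contra hyD
    obtain ⟨u, huD, huy⟩ := hD y hyD
    exact hzD (hy u huy.symm ▸ huD)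
  refine ⟨insert z D \ {x, y}, (hD.superset (subset_insert z D)).sdiff hle ?_ ?_, ?_⟩
  · simp only [mem_insert, mem_singleton, forall_eq_or_imp, forall_eq]
    exact ⟨fun w hw ↦ (hx w hw).elim, fun w hw ↦ .inl (hy w hw)⟩
  · have hz : z ∈ insert z D \ {x, y} := by simp [hxz.ne', hyz.ne']
    simp only [mem_insert, mem_singleton, forall_eq_or_imp, forall_eq]
    exact ⟨⟨z, hz, hxz.symm⟩, ⟨z, hz, hyz.symm⟩⟩
  · have hsub : {x, y} ⊆ insert z D := by simp [insert_subset_iff, hxD, hyD]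
    rw [card_sdiff_of_subset hsub, card_insert_of_notMem hzD, card_pair hxy]
    have := card_pos.2 ⟨x, hxD⟩
    omega

lemma dominationNumber_lt_of_forall_adj_eq [Finite V] (hle : G' ≤ G) (hxy : x ≠ y)
    (hyz : G.Adj y z) (hxz : z = x ∨ G.Adj x z) (hx : ∀ w, ¬ G'.Adj x w)
    (hy : ∀ w, G'.Adj y w → w = z) : dominationNumber G < dominationNumber G' := by
  rcases hxz with rfl | hxz
  · exact dominationNumber_lt_of_adj_of_forall_not_adj hle hyz.symm hx
      fun w hw ↦ hx y (hy w hw ▸ hw).symm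
  · exact dominationNumber_lt_of_adj_of_adj hle hxy hxz hyz hx hy

lemma exists_adj_of_one_le_dist_of_dist_le_two (h₁ : 1 ≤ G.dist x y) (h₂ : G.dist x y ≤ 2) :
    x ≠ y ∧ ∃ z, G.Adj y z ∧ (z = x ∨ G.Adj x z) := by
  interval_cases hd : G.dist x y
  · have hxy := dist_eq_one_iff_adj.1 hd
    exact ⟨hxy.ne, x, hxy.symm, .inl rfl⟩
  · obtain ⟨hxy, -, z, hz⟩ := edist_eq_two_iff.1 ((ENat.toNat_eq_iff two_ne_zero).1 hd)
    rw [mem_commonNeighbors] at hz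
    exact ⟨hxy, z, hz.2, .inr hz.1⟩

lemma bondageNumber_le_card {B : Finset (Sym2 V)} (hB : ↑B ⊆ G.edgeSet)
    (h : dominationNumber G < dominationNumber (G.deleteEdges ↑B)) : bondageNumber G ≤ #B :=
  Nat.sInf_le ⟨B, hB, rfl, h⟩

lemma not_adj_deleteEdges_of_incidenceSet_subset {s : Set (Sym2 V)} (h : G.incidenceSet x ⊆ s)
    (w : V) : ¬ (G.deleteEdges s).Adj x w := fun hxw ↦
  (deleteEdges_adj.1 hxw).2 (h ⟨hxw.1, Sym2.mem_mk_left x w⟩)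

lemma eq_of_adj_deleteEdges_of_incidenceSet_diff_subset {s : Set (Sym2 V)}
    (h : G.incidenceSet y \ {s(y, z)} ⊆ s) (w : V) (hyw : (G.deleteEdges s).Adj y w) : w = z := by
  by_contra hwz
  refine (deleteEdges_adj.1 hyw).2 (h ⟨⟨hyw.1, Sym2.mem_mk_left y w⟩, ?_⟩)
  exact fun hyz ↦ hwz (Sym2.congr_right.1 hyz)

lemma bondageNumber_le_degree_add_degree_sub_one [Fintype V] [DecidableRel G.Adj] (hxy : x ≠ y)
    (hyz : G.Adj y z) (hxz : z = x ∨ G.Adj x z) :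
    bondageNumber G ≤ G.degree x + G.degree y - 1 := by
  classical
  set B := G.incidenceFinset x ∪ (G.incidenceFinset y).erase s(y, z)
  have hB : (↑B : Set (Sym2 V)) = G.incidenceSet x ∪ G.incidenceSet y \ {s(y, z)} := by
    simp [B]
  have hyz_mem : s(y, z) ∈ G.incidenceFinset y := by simpa [incidenceSet] using hyz
  have hdeg := card_incidenceFinset_eq_degree G y ▸ card_pos.2 ⟨_, hyz_mem⟩
  calc bondageNumber G ≤ #B := by
        refine bondageNumber_le_card ?_ ?_
        · rw [hB]
          exact Set.union_subset (G.incidenceSet_subset x)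
            (Set.sdiff_subset.trans (G.incidenceSet_subset y))
        · refine dominationNumber_lt_of_forall_adj_eq (G.deleteEdges_le _) hxy hyz hxz
            (not_adj_deleteEdges_of_incidenceSet_subset (hB ▸ Set.subset_union_left))
            (eq_of_adj_deleteEdges_of_incidenceSet_diff_subset (hB ▸ Set.subset_union_right))
    _ ≤ #(G.incidenceFinset x) + #((G.incidenceFinset y).erase s(y, z)) := card_union_le _ _
    _ = G.degree x + G.degree y - 1 := by
        rw [card_erase_of_mem hyz_mem, card_incidenceFinset_eq_degree,
          card_incidenceFinset_eq_degree]
        omega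

end SimpleGraph

theorem bondage_le_bOne {V : Type*} [Fintype V] (G : SimpleGraph V)
    [DecidableRel G.Adj] (hG : G.edgeSet.Nonempty) :
    bondageNumber G ≤ bOne G := by
  obtain ⟨a, b, hab⟩ := ne_bot_iff_exists_adj.1 (edgeSet_nonempty.1 hG)
  have hdist : G.dist a b = 1 := dist_eq_one_iff_adj.2 hab
  obtain ⟨x, y, h₁, h₂, hb₁⟩ := Nat.sInf_mem (s := {n | ∃ x y : V, 1 ≤ G.dist x y ∧
    G.dist x y ≤ 2 ∧ n = G.degree x + G.degree y - 1}) ⟨_, a, b, hdist.ge, by omega, rfl⟩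
  obtain ⟨hxy, z, hyz, hxz⟩ := exists_adj_of_one_le_dist_of_dist_le_two h₁ h₂
  rw [bOne, hb₁]
  exact bondageNumber_le_degree_add_degree_sub_one hxy hyz hxz
end

section
/- If G is a connected finite simple graph with n ≥ 2 vertices, then the domination number satisfies γ(G) ≤ n/2. -/
open SimpleGraph

/-!
Fix a root `r`. If every vertex has a neighbour whose distance to `r` has the other parity, then
the vertices at even distance and those at odd distance are both dominating sets; they partition
the `n` vertices, so one of them has at most `n / 2` elements. In a connected graph a vertex
`v ≠ r` has such a neighbour on a shortest path to `r`, and `r` itself has one as soon as the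
graph has a second vertex.
-/

namespace SimpleGraph

variable {V : Type*} {G : SimpleGraph V}

lemma Connected.exists_adj_dist_add_one_eq (hconn : G.Connected) {v r : V} (hvr : v ≠ r) :
    ∃ u, G.Adj v u ∧ G.dist u r + 1 = G.dist v r := by
  obtain ⟨p, hp⟩ := hconn.exists_walk_length_eq_dist v r
  have hnil : ¬p.Nil := Walk.not_nil_of_ne hvr
  refine ⟨p.snd, Walk.adj_snd hnil, le_antisymm ?_ ?_⟩
  · calc G.dist p.snd r + 1 ≤ p.tail.length + 1 := by gcongr; exact dist_le _
      _ = G.dist v r := by rw [Walk.length_tail_add_one hnil, hp]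
  · calc G.dist v r ≤ G.dist v p.snd + G.dist p.snd r := (hconn v p.snd).dist_triangle_left r
      _ = G.dist p.snd r + 1 := by rw [dist_eq_one_iff_adj.mpr (Walk.adj_snd hnil), add_comm]

lemma Connected.exists_adj_even_dist_iff_not [Nontrivial V] (hconn : G.Connected) (r v : V) :
    ∃ u, G.Adj u v ∧ (Even (G.dist u r) ↔ ¬Even (G.dist v r)) := by
  by_cases hvr : v = r
  · subst hvr
    obtain ⟨u, hvu⟩ := hconn.preconnected.exists_adj_of_nontrivial v
    exact ⟨u, hvu.symm, by simp [dist_eq_one_iff_adj.mpr hvu.symm]⟩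
  · obtain ⟨u, hvu, hdist⟩ := hconn.exists_adj_dist_add_one_eq hvr
    exact ⟨u, hvu.symm, by rw [← hdist, Nat.even_add_one, not_not]⟩

end SimpleGraph

section Domination

variable {V : Type*} {G : SimpleGraph V}

lemma dominationNumber_le_card {D : Finset V} (hD : ∀ v, v ∉ D → ∃ u ∈ D, G.Adj u v) :
    dominationNumber G ≤ D.card :=
  Nat.sInf_le ⟨D, hD, rfl⟩

lemma dominationNumber_le_card_filter [Fintype V] (p : V → Prop) [DecidablePred p]
    (hp : ∀ v, ∃ u, G.Adj u v ∧ (p u ↔ ¬p v)) :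
    dominationNumber G ≤ (Finset.univ.filter p).card :=
  dominationNumber_le_card fun v hv => by
    obtain ⟨u, huv, hpu⟩ := hp v
    exact ⟨u, by simp_all, huv⟩

lemma two_mul_dominationNumber_le_card [Fintype V] (p : V → Prop)
    (hp : ∀ v, ∃ u, G.Adj u v ∧ (p u ↔ ¬p v)) :
    2 * dominationNumber G ≤ Fintype.card V := by
  classical
  have hp_not : ∀ v, ∃ u, G.Adj u v ∧ (¬p u ↔ ¬¬p v) := fun v =>
    (hp v).imp fun _ ⟨huv, hpu⟩ => ⟨huv, not_congr hpu⟩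
  have hsplit := Finset.card_filter_add_card_filter_not (s := Finset.univ) p
  have := dominationNumber_le_card_filter p hp
  have := dominationNumber_le_card_filter (fun v => ¬p v) hp_not
  rw [Finset.card_univ] at hsplit
  omega

end Domination

/-- Ore's theorem: a connected graph on `n ≥ 2` vertices has domination
number at most `n/2`. -/
theorem ore_domination {V : Type*} [Fintype V] (G : SimpleGraph V)
    (hconn : G.Connected) (hn : 2 ≤ Fintype.card V) :
    (dominationNumber G : ℝ) ≤ (Fintype.card V : ℝ) / 2 := by
  have : Nontrivial V := Fintype.one_lt_card_iff_nontrivial.mp hn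
  obtain ⟨r⟩ := hconn.nonempty
  have h := two_mul_dominationNumber_le_card (fun v => Even (G.dist v r))
    (hconn.exists_adj_even_dist_iff_not r)
  rw [le_div_iff₀ two_pos]
  exact_mod_cast (mul_comm _ _).trans_le h
end
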